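/- arXiv:1211.5326 — 4 statements merged into one kernel-verified Lean document; each statement's English description precedes it below -/
import Mathlib

section
/- If φ is a non-monochromatic coloring of a Type 4 cycle that is a constant 2-labelling with constants a and b, then either (i) φ is 1-antiperiodic (alternate), a = (p/2−1)y + z and b = (p/2)x, or (ii) there exists a natural number α with 0 ≤ α ≤ (p−4)/2 such that a = (α+1)x + αy + z and b = (α+1)(x+y), and moreover for every k with φ(k) = white the number of black vertices j with j−k of odd representative equals the number of black vertices j with j−k of even representative. -/
/-!
Since `p` is even, `i ↦ (i : ZMod 2)` is a ring homomorphism, so away from `u = 0` the weight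
`w u` only depends on the parity of `u`. Writing `N e` for the number of black vertices of
parity `e`, this gives `S_φ(k) = N (k + 1) x + N k y + [φ k = black] (z - y)`, parities read
in `ZMod 2`. If black vertices of both parities exist, comparing their labels gives
`(x - y) (N 0 - N 1) = 0`, hence `N 0 = N 1`, which is case (ii). Otherwise all black vertices
have one parity `e`; the white vertex following a black one has label `N e x`, while a white
vertex of parity `e` would have label `N e y`. So the black vertices are exactly those of
parity `e`, which is case (i).
-/

open Finset

namespace ZMod

theorem eq_add_one_of_ne {c e : ZMod 2} (h : e ≠ c) : e = c + 1 := by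
  revert c e; decide

theorem add_one_add_one (c : ZMod 2) : c + 1 + 1 = c := by
  revert c; decide

theorem add_one_ne_self (c : ZMod 2) : c + 1 ≠ c := by
  revert c; decide

theorem not_add_one_eq_iff_eq (d c : ZMod 2) : ¬(d + 1 = c ↔ d = c) := by
  revert c d; decide

variable {p : ℕ}

theorem cast_add_one (h : 2 ∣ p) (i : ZMod p) : ((i + 1).cast : ZMod 2) = i.cast + 1 := by
  rw [cast_add h, cast_one h]

variable [NeZero p]

theorem even_val_iff_cast_eq_zero (i : ZMod p) : Even i.val ↔ (i.cast : ZMod 2) = 0 := by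
  rw [cast_eq_val, natCast_eq_zero_iff_even]

theorem odd_val_iff_cast_eq_one (i : ZMod p) : Odd i.val ↔ (i.cast : ZMod 2) = 1 := by
  rw [cast_eq_val, natCast_eq_one_iff_odd]

theorem even_val_sub_iff (h : 2 ∣ p) (j k : ZMod p) :
    Even (j - k).val ↔ (j.cast : ZMod 2) = k.cast := by
  rw [even_val_iff_cast_eq_zero, cast_sub h, sub_eq_zero]

theorem odd_val_sub_iff (h : 2 ∣ p) (j k : ZMod p) :
    Odd (j - k).val ↔ (j.cast : ZMod 2) = k.cast + 1 := by
  rw [odd_val_iff_cast_eq_one, cast_sub h, sub_eq_iff_eq_add']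

theorem card_filter_cast_eq (h : 2 ∣ p) (e : ZMod 2) :
    #{i : ZMod p | (i.cast : ZMod 2) = e} = p / 2 := by
  have hsurj : ∀ e : ZMod 2, e ∈ Set.range (castHom h (ZMod 2)) := fun e =>
    ⟨e.val, by simp⟩
  have hfib : ∀ e, #{i : ZMod p | (i.cast : ZMod 2) = e}
      = #{i : ZMod p | (i.cast : ZMod 2) = 0} :=
    fun e => AddMonoidHom.card_fiber_eq_of_mem_range (castHom h (ZMod 2)) (hsurj e) (hsurj 0)
  have htot := card_eq_sum_card_fiberwise (f := fun i : ZMod p => (i.cast : ZMod 2))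
    (s := univ) (t := univ) (fun _ _ => mem_univ _)
  simp only [card_univ, ZMod.card, hfib, sum_const, smul_eq_mul] at htot
  rw [hfib]
  omega

end ZMod

theorem Bool.exists_eq_true_and_exists_eq_false {α : Type*} {f : α → Bool}
    (h : ∃ i j, f i ≠ f j) : (∃ i, f i = true) ∧ ∃ j, f j = false := by
  obtain ⟨i, j, hij⟩ := h
  cases hi : f i
  · exact ⟨⟨j, by simpa [hi] using hij.symm⟩, ⟨i, hi⟩⟩
  · exact ⟨⟨i, hi⟩, ⟨j, by simpa [hi] using hij.symm⟩⟩

variable {p : ℕ}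

structure IsType4Weight (w : ZMod p → ℝ) (z x y : ℝ) : Prop where
  apply_zero : w 0 = z
  apply_of_odd : ∀ i : ZMod p, Odd i.val → w i = x
  apply_of_even : ∀ i : ZMod p, i ≠ 0 → Even i.val → w i = y

theorem IsType4Weight.apply_eq {w : ZMod p → ℝ} {z x y : ℝ} (hw : IsType4Weight w z x y)
    (i : ZMod p) : w i = (if Odd i.val then x else y) + if i = 0 then z - y else 0 := by
  by_cases hi : i = 0
  · simp [hi, hw.apply_zero]
  rcases Nat.even_or_odd i.val with he | ho
  · simp [hi, hw.apply_of_even i hi he, Nat.not_odd_iff_even.mpr he]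
  · simp [hi, hw.apply_of_odd i ho, ho]

variable [NeZero p]

/-- The paper's `S_φ(k)`. -/
def labelSum (w : ZMod p → ℝ) (φ : ZMod p → Bool) (k : ZMod p) : ℝ :=
  ∑ u : ZMod p, if φ (u + k) = true then w u else 0

def IsConstant2Labelling (w : ZMod p → ℝ) (φ : ZMod p → Bool) (a b : ℝ) : Prop :=
  ∀ k : ZMod p, (φ k = true → labelSum w φ k = a) ∧ (φ k = false → labelSum w φ k = b)

theorem labelSum_eq_sum_black (w : ZMod p → ℝ) (φ : ZMod p → Bool) (k : ZMod p) :
    labelSum w φ k = ∑ j : ZMod p, if φ j = true then w (j - k) else 0 :=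
  Fintype.sum_equiv (Equiv.addRight k) _ _ fun u => by simp

def blackCount (φ : ZMod p → Bool) (e : ZMod 2) : ℕ :=
  #{j | φ j = true ∧ (j.cast : ZMod 2) = e}

theorem card_black_odd_sub (h : 2 ∣ p) (φ : ZMod p → Bool) (k : ZMod p) :
    #{j | φ j = true ∧ Odd (j - k).val} = blackCount φ (k.cast + 1) := by
  simp_rw [ZMod.odd_val_sub_iff h, blackCount]

theorem card_black_even_sub (h : 2 ∣ p) (φ : ZMod p → Bool) (k : ZMod p) :
    #{j | φ j = true ∧ Even (j - k).val} = blackCount φ k.cast := by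
  simp_rw [ZMod.even_val_sub_iff h, blackCount]

theorem card_black_eq (φ : ZMod p → Bool) :
    #{j | φ j = true} = blackCount φ 0 + blackCount φ 1 := by
  rw [card_eq_sum_card_fiberwise (f := fun j : ZMod p => (j.cast : ZMod 2)) (t := univ)
    (fun _ _ => mem_univ _)]
  simp only [filter_filter]
  exact Fin.sum_univ_two (fun e : ZMod 2 => blackCount φ e)

theorem blackCount_add_one_eq_zero {φ : ZMod p → Bool} {c : ZMod 2}
    (hpar : ∀ k, φ k = true → (k.cast : ZMod 2) = c) : blackCount φ (c + 1) = 0 :=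
  card_eq_zero.2 <| filter_eq_empty_iff.2 fun j _ ⟨hj, hjc⟩ =>
    ZMod.add_one_ne_self c (hjc.symm.trans (hpar j hj))

namespace IsType4Weight

variable {w : ZMod p → ℝ} {z x y : ℝ}

theorem labelSum_eq (hw : IsType4Weight w z x y) (φ : ZMod p → Bool) (k : ZMod p) :
    labelSum w φ k = #{j | φ j = true ∧ Odd (j - k).val} * x
      + #{j | φ j = true ∧ Even (j - k).val} * y + if φ k = true then z - y else 0 := by
  simp_rw [labelSum_eq_sum_black, ← sum_filter, hw.apply_eq, sub_eq_zero, sum_add_distrib,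
    sum_ite_eq', mem_filter_univ, sum_ite, sum_const, filter_filter, Nat.not_odd_iff_even,
    nsmul_eq_mul]

theorem labelSum_eq_blackCount (hw : IsType4Weight w z x y) (h : 2 ∣ p) (φ : ZMod p → Bool)
    (k : ZMod p) :
    labelSum w φ k = blackCount φ (k.cast + 1) * x + blackCount φ k.cast * y
      + if φ k = true then z - y else 0 := by
  rw [hw.labelSum_eq, card_black_odd_sub h, card_black_even_sub h]

end IsType4Weight

namespace IsConstant2Labelling

variable {w : ZMod p → ℝ} {z x y a b : ℝ} {φ : ZMod p → Bool}

theorem eq_of_black (hl : IsConstant2Labelling w φ a b) (hw : IsType4Weight w z x y) (h : 2 ∣ p)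
    {k : ZMod p} (hk : φ k = true) :
    a = blackCount φ (k.cast + 1) * x + blackCount φ k.cast * y + (z - y) := by
  rw [← (hl k).1 hk, hw.labelSum_eq_blackCount h, if_pos hk]

theorem eq_of_white (hl : IsConstant2Labelling w φ a b) (hw : IsType4Weight w z x y) (h : 2 ∣ p)
    {k : ZMod p} (hk : φ k = false) :
    b = blackCount φ (k.cast + 1) * x + blackCount φ k.cast * y := by
  rw [← (hl k).2 hk, hw.labelSum_eq_blackCount h, if_neg (by simp [hk]), add_zero]

theorem blackCount_eq_of_black_of_cast_ne (hl : IsConstant2Labelling w φ a b)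
    (hw : IsType4Weight w z x y) (hxy : x ≠ y) (h : 2 ∣ p) {k₀ k₁ : ZMod p}
    (hk₀ : φ k₀ = true) (hk₁ : φ k₁ = true) (hne : (k₀.cast : ZMod 2) ≠ k₁.cast) (e : ZMod 2) :
    blackCount φ e = blackCount φ k₀.cast := by
  have hcast₁ : (k₁.cast : ZMod 2) = k₀.cast + 1 := ZMod.eq_add_one_of_ne hne.symm
  have hswap : ((blackCount φ (k₀.cast + 1) : ℝ) - blackCount φ k₀.cast) * (x - y) = 0 := by
    have h₀ := hl.eq_of_black hw h hk₀
    have h₁ := hl.eq_of_black hw h hk₁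
    rw [hcast₁, ZMod.add_one_add_one] at h₁
    linear_combination h₁ - h₀
  have hstep : blackCount φ (k₀.cast + 1) = blackCount φ k₀.cast := by
    exact_mod_cast sub_eq_zero.mp ((mul_eq_zero.mp hswap).resolve_right (sub_ne_zero.mpr hxy))
  rcases eq_or_ne e k₀.cast with rfl | he
  · rfl
  · rw [ZMod.eq_add_one_of_ne he, hstep]

theorem exists_balanced_of_cast_ne (hl : IsConstant2Labelling w φ a b) (hw : IsType4Weight w z x y) (hxy : x ≠ y)
    (h : 2 ∣ p) {k₀ k₁ kw : ZMod p} (hk₀ : φ k₀ = true) (hk₁ : φ k₁ = true)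
    (hne : (k₀.cast : ZMod 2) ≠ k₁.cast) (hkw : φ kw = false) :
    ∃ α : ℕ, α ≤ (p - 4) / 2 ∧
      a = ((α : ℝ) + 1) * x + (α : ℝ) * y + z ∧
      b = ((α : ℝ) + 1) * (x + y) ∧
      ∀ k : ZMod p, φ k = false →
        #{j | φ j = true ∧ Odd (j - k).val} = #{j | φ j = true ∧ Even (j - k).val} := by
  have hN := hl.blackCount_eq_of_black_of_cast_ne hw hxy h hk₀ hk₁ hne
  have hpos : 0 < blackCount φ k₀.cast := card_pos.2 ⟨k₀, by simp [hk₀]⟩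
  have hlt : #{j | φ j = true} < p := by
    simpa using card_lt_card (filter_ssubset.2 ⟨kw, mem_univ _, by simp [hkw]⟩)
  rw [card_black_eq, hN 0, hN 1] at hlt
  refine ⟨blackCount φ k₀.cast - 1, by omega, ?_, ?_, fun k _ => ?_⟩
  · rw [hl.eq_of_black hw h hk₀, hN (k₀.cast + 1), Nat.cast_pred hpos]
    ring
  · rw [hl.eq_of_white hw h hkw, hN, hN kw.cast, Nat.cast_pred hpos]
    ring
  · rw [card_black_odd_sub h, card_black_even_sub h, hN, hN k.cast]

theorem black_iff_cast_eq (hl : IsConstant2Labelling w φ a b) (hw : IsType4Weight w z x y)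
    (hxy : x ≠ y) (h : 2 ∣ p) {kb : ZMod p} (hkb : φ kb = true)
    (hpar : ∀ k, φ k = true → (k.cast : ZMod 2) = kb.cast) (k : ZMod p) :
    φ k = true ↔ (k.cast : ZMod 2) = kb.cast := by
  refine ⟨hpar k, fun hk => ?_⟩
  by_contra hwhite
  rw [Bool.not_eq_true] at hwhite
  have hzero := blackCount_add_one_eq_zero hpar
  have hpos : 0 < blackCount φ kb.cast := card_pos.2 ⟨kb, by simp [hkb]⟩
  have hnext : φ (kb + 1) = false := Bool.eq_false_iff.2 fun hb =>
    ZMod.add_one_ne_self _ ((ZMod.cast_add_one h kb).symm.trans (hpar _ hb))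
  have h₁ := hl.eq_of_white hw h hnext
  have h₂ := hl.eq_of_white hw h hwhite
  rw [ZMod.cast_add_one h, ZMod.add_one_add_one, hzero] at h₁
  rw [hk, hzero] at h₂
  have : (blackCount φ kb.cast : ℝ) * (x - y) = 0 := by linear_combination h₂ - h₁
  exact mul_ne_zero (Nat.cast_ne_zero.2 hpos.ne') (sub_ne_zero.2 hxy) this

theorem alternating_of_forall_cast_eq (hl : IsConstant2Labelling w φ a b) (hw : IsType4Weight w z x y) (hxy : x ≠ y)
    (h : 2 ∣ p) {kb : ZMod p} (hkb : φ kb = true)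
    (hpar : ∀ k, φ k = true → (k.cast : ZMod 2) = kb.cast) :
    (∀ i : ZMod p, φ (i + 1) ≠ φ i) ∧
      a = (((p / 2 : ℕ) : ℝ) - 1) * y + z ∧ b = ((p / 2 : ℕ) : ℝ) * x := by
  have hiff := hl.black_iff_cast_eq hw hxy h hkb hpar
  have hzero := blackCount_add_one_eq_zero hpar
  have hhalf : blackCount φ kb.cast = p / 2 := by
    rw [← ZMod.card_filter_cast_eq h kb.cast, blackCount]
    exact congrArg card (filter_congr fun j _ => by rw [hiff, and_self])
  have hnext : φ (kb + 1) = false := by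
    rw [← Bool.not_eq_true, hiff, ZMod.cast_add_one h]
    exact ZMod.add_one_ne_self _
  refine ⟨fun i => ?_, ?_, ?_⟩
  · rw [Ne, Bool.eq_iff_iff, hiff, hiff, ZMod.cast_add_one h]
    exact ZMod.not_add_one_eq_iff_eq _ _
  · rw [hl.eq_of_black hw h hkb, hzero, hhalf]
    ring
  · rw [hl.eq_of_white hw h hnext, ZMod.cast_add_one h, ZMod.add_one_add_one, hzero, hhalf]
    ring

end IsConstant2Labelling

theorem type4_constant2Labelling_general
    (p : ℕ) [NeZero p] (hpe : Even p)
    (w : ZMod p → ℝ) (z x y : ℝ) (hxy : x ≠ y)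
    (hw0 : w 0 = z)
    (hwx : ∀ i : ZMod p, Odd i.val → w i = x)
    (hwy : ∀ i : ZMod p, i ≠ 0 → Even i.val → w i = y)
    (φ : ZMod p → Bool) (hnontriv : ∃ i j : ZMod p, φ i ≠ φ j)
    (a b : ℝ)
    (hlab : ∀ k : ZMod p,
      (φ k = true → (∑ u : ZMod p, if φ (u + k) = true then w u else 0) = a) ∧
      (φ k = false → (∑ u : ZMod p, if φ (u + k) = true then w u else 0) = b)) :
    ((∀ i : ZMod p, φ (i + 1) ≠ φ i) ∧
      a = (((p / 2 : ℕ) : ℝ) - 1) * y + z ∧ b = ((p / 2 : ℕ) : ℝ) * x) ∨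
    (∃ α : ℕ, α ≤ (p - 4) / 2 ∧
      a = ((α : ℝ) + 1) * x + (α : ℝ) * y + z ∧
      b = ((α : ℝ) + 1) * (x + y) ∧
      ∀ k : ZMod p, φ k = false →
        (Finset.univ.filter fun j : ZMod p => φ j = true ∧ Odd (j - k).val).card =
          (Finset.univ.filter fun j : ZMod p => φ j = true ∧ Even (j - k).val).card) := by
  have h2 : 2 ∣ p := even_iff_two_dvd.mp hpe
  have hw : IsType4Weight w z x y := ⟨hw0, hwx, hwy⟩
  have hl : IsConstant2Labelling w φ a b := hlab
  obtain ⟨⟨kb, hkb⟩, ⟨kw, hkw⟩⟩ := Bool.exists_eq_true_and_exists_eq_false hnontriv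
  by_cases hmixed : ∃ k, φ k = true ∧ (k.cast : ZMod 2) ≠ kb.cast
  · obtain ⟨k, hk, hne⟩ := hmixed
    exact Or.inr (hl.exists_balanced_of_cast_ne hw hxy h2 hk hkb hne hkw)
  · refine Or.inl (hl.alternating_of_forall_cast_eq hw hxy h2 hkb fun k hk => ?_)
    by_contra hne
    exact hmixed ⟨k, hk, hne⟩

/-- Non-trivial constant 2-labellings of Type 4 cycles (`z (xy)^((p-2)/2) x`):
either `φ` is alternate with `a = (p/2-1)y + z` and `b = (p/2)x`, or there is
`0 ≤ α ≤ (p-4)/2` with `a = (α+1)x + αy + z`, `b = (α+1)(x+y)`, and from every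
white vertex the numbers of black vertices at odd and at even distance agree. -/
theorem type4_constant2Labelling
    (p : ℕ) [NeZero p] (hp : 4 ≤ p) (hpe : Even p)
    (w : ZMod p → ℝ) (z x y : ℝ) (hxy : x ≠ y)
    (hw0 : w 0 = z)
    (hwx : ∀ i : ZMod p, Odd i.val → w i = x)
    (hwy : ∀ i : ZMod p, i ≠ 0 → Even i.val → w i = y)
    (φ : ZMod p → Bool) (hnontriv : ∃ i j : ZMod p, φ i ≠ φ j)
    (a b : ℝ)
    (hlab : ∀ k : ZMod p,
      (φ k = true → (∑ u : ZMod p, if φ (u + k) = true then w u else 0) = a) ∧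
      (φ k = false → (∑ u : ZMod p, if φ (u + k) = true then w u else 0) = b)) :
    ((∀ i : ZMod p, φ (i + 1) ≠ φ i) ∧
      a = (((p / 2 : ℕ) : ℝ) - 1) * y + z ∧ b = ((p / 2 : ℕ) : ℝ) * x) ∨
    (∃ α : ℕ, α ≤ (p - 4) / 2 ∧
      a = ((α : ℝ) + 1) * x + (α : ℝ) * y + z ∧
      b = ((α : ℝ) + 1) * (x + y) ∧
      ∀ k : ZMod p, φ k = false →
        (Finset.univ.filter fun j : ZMod p => φ j = true ∧ Odd (j - k).val).card =
          (Finset.univ.filter fun j : ZMod p => φ j = true ∧ Even (j - k).val).card) :=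
  type4_constant2Labelling_general p hpe w z x y hxy hw0 hwx hwy φ hnontriv a b hlab
end

section
/- Every alternate (1-antiperiodic) coloring φ of a Type 2 cycle is a constant 2-labelling: if p ≡ 0 (mod 4) then with constants a = (p/2−2)x + t + z and b = (p/2)x, and if p ≡ 2 (mod 4) then with constants a = (p/2−1)x + z and b = (p/2−1)x + t. -/
/-!
Shifting by one swaps the two colours of an alternate colouring, so exactly half of the vertices
are black, and `φ (k + n)` is `φ k` or its negation according to the parity of `n`. Writing the
Type 2 weight as the constant `x` plus point masses `z - x` at `0` and `t - x` at `p/2`, the sum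
`S_φ(k)` becomes `(p/2) x + [φ k] (z - x) + [φ (k + p/2)] (t - x)`, and the parity of `p/2`
decides whether `k + p/2` has the colour of `k`.
-/

open Finset

section Alternating

variable {α : Type*} [AddCommGroupWithOne α] {φ : α → Bool}

theorem apply_add_one_of_alternating (halt : ∀ i, φ (i + 1) ≠ φ i) (i : α) :
    φ (i + 1) = !φ i :=
  Bool.eq_not_iff.mpr (halt i)

theorem apply_add_natCast_of_alternating (halt : ∀ i, φ (i + 1) ≠ φ i) (i : α) (n : ℕ) :
    φ (i + n) = if Even n then φ i else !φ i := by
  induction n with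
  | zero => simp
  | succ n ih =>
    rw [Nat.cast_succ, ← add_assoc, apply_add_one_of_alternating halt, ih]
    by_cases hn : Even n <;> simp [hn, Nat.even_add_one]

theorem two_mul_card_filter_of_alternating [Fintype α] (halt : ∀ i, φ (i + 1) ≠ φ i) :
    2 * #{u | φ u = true} = Fintype.card α := by
  have hshift : #{u | φ u = true} = #{u | ¬φ u = true} := by
    refine card_nbij' (· + 1) (· - 1) ?_ ?_ ?_ ?_ <;> intro u
    · simp [apply_add_one_of_alternating halt]
    · have := apply_add_one_of_alternating halt (u - 1)
      simp_all
    all_goals simp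
  rw [two_mul, ← card_univ]
  nth_rw 2 [hshift]
  exact card_filter_add_card_filter_not _

/-- `S_φ(k)` in the paper's notation. -/
def blackSum [Fintype α] (φ : α → Bool) (w : α → ℝ) (k : α) : ℝ :=
  ∑ u, if φ (u + k) = true then w u else 0

theorem blackSum_add [Fintype α] (w₁ w₂ : α → ℝ) (k : α) :
    blackSum φ (fun u ↦ w₁ u + w₂ u) k = blackSum φ w₁ k + blackSum φ w₂ k := by
  simp only [blackSum, ite_add_zero, sum_add_distrib]

theorem blackSum_const [Fintype α] (halt : ∀ i, φ (i + 1) ≠ φ i) (c : ℝ) (k : α) :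
    blackSum φ (fun _ ↦ c) k = ((Fintype.card α / 2 : ℕ) : ℝ) * c := by
  have halt_k : ∀ i, φ (i + 1 + k) ≠ φ (i + k) := fun i ↦ add_right_comm i 1 k ▸ halt (i + k)
  have hcard := two_mul_card_filter_of_alternating (φ := (φ <| · + k)) halt_k
  rw [blackSum, sum_ite, sum_const_zero, add_zero, sum_const, nsmul_eq_mul]
  congr
  omega

theorem blackSum_single [Fintype α] [DecidableEq α] (a : α) (c : ℝ) (k : α) :
    blackSum φ (fun u ↦ if u = a then c else 0) k = if φ (a + k) = true then c else 0 := by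
  rw [blackSum, Fintype.sum_eq_single a fun u hu ↦ by simp [hu]]
  simp

theorem blackSum_eq_of_eq_off_pair [Fintype α] [DecidableEq α] (halt : ∀ i, φ (i + 1) ≠ φ i)
    {w : α → ℝ} {c : α} {x z t : ℝ} (hc : c ≠ 0) (hw0 : w 0 = z) (hwc : w c = t)
    (hw : ∀ i, i ≠ 0 → i ≠ c → w i = x) (k : α) :
    blackSum φ w k = ((Fintype.card α / 2 : ℕ) : ℝ) * x + (if φ k = true then z - x else 0) +
      (if φ (k + c) = true then t - x else 0) := by
  have hw' : w = fun u ↦ x + (if u = 0 then z - x else 0) + (if u = c then t - x else 0) := by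
    funext u
    by_cases h0 : u = 0
    · simp [h0, hw0, hc.symm]
    by_cases hcu : u = c
    · simp [hcu, hwc, hc]
    simp [hw u h0 hcu, h0, hcu]
  rw [hw', blackSum_add, blackSum_add, blackSum_const halt, blackSum_single, blackSum_single,
    zero_add, add_comm c]

end Alternating

theorem type2_alternate_constant2Labelling_general
    (p : ℕ) [NeZero p] (hpe : Even p)
    (w : ZMod p → ℝ) (z x t : ℝ)
    (hw0 : w 0 = z) (hwt : w ((p / 2 : ℕ) : ZMod p) = t)
    (hw : ∀ i : ZMod p, i ≠ 0 → i ≠ ((p / 2 : ℕ) : ZMod p) → w i = x)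
    (φ : ZMod p → Bool) (halt : ∀ i : ZMod p, φ (i + 1) ≠ φ i) :
    (p % 4 = 0 → ∀ k : ZMod p,
      (φ k = true → (∑ u : ZMod p, if φ (u + k) = true then w u else 0) =
        (((p / 2 : ℕ) : ℝ) - 2) * x + t + z) ∧
      (φ k = false → (∑ u : ZMod p, if φ (u + k) = true then w u else 0) =
        ((p / 2 : ℕ) : ℝ) * x)) ∧
    (p % 4 = 2 → ∀ k : ZMod p,
      (φ k = true → (∑ u : ZMod p, if φ (u + k) = true then w u else 0) =
        (((p / 2 : ℕ) : ℝ) - 1) * x + z) ∧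
      (φ k = false → (∑ u : ZMod p, if φ (u + k) = true then w u else 0) =
        (((p / 2 : ℕ) : ℝ) - 1) * x + t)) := by
  have hhalf : ((p / 2 : ℕ) : ZMod p) ≠ 0 := by
    have := NeZero.ne p
    have := Nat.even_iff.mp hpe
    rw [ne_eq, ZMod.natCast_eq_zero_iff]
    exact fun hdvd ↦ by have := Nat.eq_zero_of_dvd_of_lt hdvd (by omega); omega
  have key (k : ZMod p) : (∑ u : ZMod p, if φ (u + k) = true then w u else 0) = _ :=
    blackSum_eq_of_eq_off_pair halt hhalf hw0 hwt hw k
  simp only [ZMod.card, apply_add_natCast_of_alternating halt] at key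
  refine ⟨fun h4 k ↦ ?_, fun h4 k ↦ ?_⟩
  · have hq : Even (p / 2) := Nat.even_iff.mpr (by omega)
    refine ⟨fun hk ↦ ?_, fun hk ↦ by simp [key, hk, hq]⟩
    simp [key, hk, hq]
    ring
  · have hq : ¬Even (p / 2) := Nat.not_even_iff.mpr (by omega)
    constructor <;> intro hk <;> (simp [key, hk, hq]; ring)

/-- Every alternate coloring of a Type 2 cycle is a constant 2-labelling:
with `a = (p/2-2)x + t + z`, `b = (p/2)x` when `p ≡ 0 (mod 4)`, and with
`a = (p/2-1)x + z`, `b = (p/2-1)x + t` when `p ≡ 2 (mod 4)`. -/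
theorem type2_alternate_constant2Labelling
    (p : ℕ) [NeZero p] (hp : 4 ≤ p) (hpe : Even p)
    (w : ZMod p → ℝ) (z x t : ℝ) (hxt : x ≠ t)
    (hw0 : w 0 = z) (hwt : w ((p / 2 : ℕ) : ZMod p) = t)
    (hw : ∀ i : ZMod p, i ≠ 0 → i ≠ ((p / 2 : ℕ) : ZMod p) → w i = x)
    (φ : ZMod p → Bool) (halt : ∀ i : ZMod p, φ (i + 1) ≠ φ i) :
    (p % 4 = 0 → ∀ k : ZMod p,
      (φ k = true → (∑ u : ZMod p, if φ (u + k) = true then w u else 0) =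
        (((p / 2 : ℕ) : ℝ) - 2) * x + t + z) ∧
      (φ k = false → (∑ u : ZMod p, if φ (u + k) = true then w u else 0) =
        ((p / 2 : ℕ) : ℝ) * x)) ∧
    (p % 4 = 2 → ∀ k : ZMod p,
      (φ k = true → (∑ u : ZMod p, if φ (u + k) = true then w u else 0) =
        (((p / 2 : ℕ) : ℝ) - 1) * x + z) ∧
      (φ k = false → (∑ u : ZMod p, if φ (u + k) = true then w u else 0) =
        (((p / 2 : ℕ) : ℝ) - 1) * x + t)) :=
  type2_alternate_constant2Labelling_general p hpe w z x t hw0 hwt hw φ halt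
end

section
/- Every alternate (1-antiperiodic) coloring φ of a Type 7 cycle is a constant 2-labelling with constants a = (p/2−1)y + z and b = (p/2−1)x + t. -/
/-!
Since φ alternates, φ (u + k) = φ k exactly when the representative of u is even, so the black
sum seen from a black vertex is the total weight of the even residues, and from a white vertex
that of the odd residues. As p is even, the reflection i ↦ p - i preserves parity, and as p / 2
is odd, the even residues are 0 (weight z) and p / 2 - 1 residues of weight y, while the odd
ones are p / 2 (weight t) and p / 2 - 1 residues of weight x.
-/

open Finset

lemma ZMod.sum_univ_eq_sum_range {M : Type*} [AddCommMonoid M] {p : ℕ} [NeZero p]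
    (f : ZMod p → M) : ∑ u, f u = ∑ i ∈ range p, f i := by
  refine Finset.sum_nbij' ZMod.val Nat.cast (fun u _ => by simpa using u.val_lt)
    (fun _ _ => mem_univ _) (fun u _ => by simp) (fun i hi => ?_) (fun u _ => by simp)
  exact ZMod.val_cast_of_lt (mem_range.mp hi)

lemma Finset.sum_range_two_mul {M : Type*} [AddCommMonoid M] (f : ℕ → M) (m : ℕ) :
    ∑ i ∈ range (2 * m), f i = ∑ j ∈ range m, (f (2 * j) + f (2 * j + 1)) := by
  induction m with
  | zero => simp
  | succ m ih => rw [mul_add_one, sum_range_succ, sum_range_succ, sum_range_succ, ih, add_assoc]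

lemma Finset.sum_range_ite_eq_add {M : Type*} [AddCommMonoid M] {m r : ℕ} (hr : r < m)
    (a b : M) : ∑ j ∈ range m, (if j = r then a else b) = a + (m - 1) • b := by
  rw [← add_sum_erase _ _ (mem_range.mpr hr), if_pos rfl,
    sum_congr rfl fun j hj => if_neg (ne_of_mem_erase hj), sum_const,
    card_erase_of_mem (mem_range.mpr hr), card_range]

lemma alternating_natCast_add_eq_iff_even {R : Type*} [AddCommMonoidWithOne R] {φ : R → Bool}
    (halt : ∀ i, φ (i + 1) ≠ φ i) (k : R) (n : ℕ) : φ (n + k) = φ k ↔ Even n := by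
  induction n with
  | zero => simp
  | succ n ih =>
    have hstep : φ ((n + 1 : ℕ) + k) = !φ (n + k) := by
      rw [Nat.cast_succ, add_right_comm]; exact Bool.eq_not_iff.mpr (halt _)
    rw [hstep, Nat.even_add_one, ← ih]
    cases φ (n + k) <;> cases φ k <;> simp

structure IsType7Weight (p : ℕ) (w : ZMod p → ℝ) (z x y t : ℝ) : Prop where
  zero : w 0 = z
  half : w ((p / 2 : ℕ) : ZMod p) = t
  odd : ∀ i : ℕ, 1 ≤ i → i < p / 2 → Odd i → w (i : ZMod p) = x
  even : ∀ i : ℕ, 1 ≤ i → i < p / 2 → Even i → w (i : ZMod p) = y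
  symm : ∀ i : ℕ, 1 ≤ i → i < p / 2 → w (((p - i : ℕ) : ZMod p)) = w (i : ZMod p)

namespace IsType7Weight

variable {p : ℕ} {w : ZMod p → ℝ} {z x y t : ℝ}

lemma apply_of_lt_half (hw : IsType7Weight p w z x y t) {v : ℕ} (hv0 : 1 ≤ v) (hv : v < p / 2) :
    w v = if Even v then y else x := by
  split_ifs with he
  · exact hw.even v hv0 hv he
  · exact hw.odd v hv0 hv (Nat.not_even_iff_odd.mp he)

lemma apply_natCast_of_lt (hw : IsType7Weight p w z x y t) (hp : Even p) {v : ℕ} (hv : v < p) :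
    w v = if v = 0 then z else if v = p / 2 then t else if Even v then y else x := by
  have h2p := hp.two_dvd
  rcases Nat.lt_trichotomy v (p / 2) with hlt | rfl | hgt
  · rcases Nat.eq_zero_or_pos v with rfl | hv0
    · simpa using hw.zero
    · rw [hw.apply_of_lt_half hv0 hlt, if_neg hv0.ne', if_neg hlt.ne]
  · rw [hw.half, if_neg (by omega), if_pos rfl]
  · have hrefl : v = p - (p - v) := by omega
    rw [hrefl, hw.symm (p - v) (by omega) (by omega), hw.apply_of_lt_half (by omega) (by omega),
      ← hrefl, if_neg (show v ≠ 0 by omega), if_neg hgt.ne']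
    simp [Nat.even_sub hv.le, hp]

lemma sum_ite_even [NeZero p] (hw : IsType7Weight p w z x y t) (hp4 : p % 4 = 2) :
    ∑ u : ZMod p, (if Even u.val then w u else 0) = ((p / 2 : ℕ) - 1 : ℝ) * y + z := by
  calc ∑ u : ZMod p, (if Even u.val then w u else 0)
      = ∑ i ∈ range (2 * (p / 2)), if Even i then w i else 0 := by
        rw [ZMod.sum_univ_eq_sum_range, show 2 * (p / 2) = p by omega]
        exact sum_congr rfl fun i hi => by rw [ZMod.val_cast_of_lt (mem_range.mp hi)]
    _ = ∑ j ∈ range (p / 2), if j = 0 then z else y := by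
        rw [sum_range_two_mul]
        refine sum_congr rfl fun j hj => ?_
        have hj : j < p / 2 := mem_range.mp hj
        rw [hw.apply_natCast_of_lt (v := 2 * j) ⟨p / 2, by omega⟩ (by omega)]
        simp [show 2 * j ≠ p / 2 by omega]
    _ = ((p / 2 : ℕ) - 1 : ℝ) * y + z := by
        rw [sum_range_ite_eq_add (by omega), nsmul_eq_mul, Nat.cast_sub (by omega)]
        push_cast
        ring

lemma sum_ite_odd [NeZero p] (hw : IsType7Weight p w z x y t) (hp4 : p % 4 = 2) :
    ∑ u : ZMod p, (if Odd u.val then w u else 0) = ((p / 2 : ℕ) - 1 : ℝ) * x + t := by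
  calc ∑ u : ZMod p, (if Odd u.val then w u else 0)
      = ∑ i ∈ range (2 * (p / 2)), if Odd i then w i else 0 := by
        rw [ZMod.sum_univ_eq_sum_range, show 2 * (p / 2) = p by omega]
        exact sum_congr rfl fun i hi => by rw [ZMod.val_cast_of_lt (mem_range.mp hi)]
    _ = ∑ j ∈ range (p / 2), if j = p / 4 then t else x := by
        rw [sum_range_two_mul]
        refine sum_congr rfl fun j hj => ?_
        have hj : j < p / 2 := mem_range.mp hj
        rw [hw.apply_natCast_of_lt (v := 2 * j + 1) ⟨p / 2, by omega⟩ (by omega)]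
        simp [show 2 * j + 1 = p / 2 ↔ j = p / 4 by omega]
    _ = ((p / 2 : ℕ) - 1 : ℝ) * x + t := by
        rw [sum_range_ite_eq_add (by omega), nsmul_eq_mul, Nat.cast_sub (by omega)]
        push_cast
        ring

end IsType7Weight

theorem type7_alternate_constant2Labelling_general
    (p : ℕ) [NeZero p] (hp4 : p % 4 = 2)
    (w : ZMod p → ℝ) (z x y t : ℝ)
    (hw0 : w 0 = z) (hwt : w ((p / 2 : ℕ) : ZMod p) = t)
    (hwx : ∀ i : ℕ, 1 ≤ i → i < p / 2 → Odd i → w (i : ZMod p) = x)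
    (hwy : ∀ i : ℕ, 1 ≤ i → i < p / 2 → Even i → w (i : ZMod p) = y)
    (hwsym : ∀ i : ℕ, 1 ≤ i → i < p / 2 →
      w (((p - i : ℕ) : ZMod p)) = w (i : ZMod p))
    (φ : ZMod p → Bool) (halt : ∀ i : ZMod p, φ (i + 1) ≠ φ i) :
    ∀ k : ZMod p,
      (φ k = true → (∑ u : ZMod p, if φ (u + k) = true then w u else 0) =
        (((p / 2 : ℕ) : ℝ) - 1) * y + z) ∧
      (φ k = false → (∑ u : ZMod p, if φ (u + k) = true then w u else 0) =
        (((p / 2 : ℕ) : ℝ) - 1) * x + t) := by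
  have hw : IsType7Weight p w z x y t := ⟨hw0, hwt, hwx, hwy, hwsym⟩
  intro k
  have hsame (u : ZMod p) : φ (u + k) = φ k ↔ Even u.val := by
    simpa using alternating_natCast_add_eq_iff_even halt k u.val
  refine ⟨fun hk => ?_, fun hk => ?_⟩
  · rw [← hw.sum_ite_even hp4]
    exact sum_congr rfl fun u _ => if_congr (hk ▸ hsame u) rfl rfl
  · rw [← hw.sum_ite_odd hp4]
    refine sum_congr rfl fun u _ => if_congr ?_ rfl rfl
    rw [← Nat.not_even_iff_odd, ← hsame u, hk, Bool.not_eq_false]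

/-- Every alternate coloring of a Type 7 cycle
(`z (xy)^((p-2)/4) t (yx)^((p-2)/4)`) is a constant 2-labelling with constants
`a = (p/2-1)y + z` and `b = (p/2-1)x + t`. -/
theorem type7_alternate_constant2Labelling
    (p : ℕ) [NeZero p] (hp : 6 ≤ p) (hp4 : p % 4 = 2)
    (w : ZMod p → ℝ) (z x y t : ℝ) (hxy : x ≠ y) (hxt : x ≠ t)
    (hw0 : w 0 = z) (hwt : w ((p / 2 : ℕ) : ZMod p) = t)
    (hwx : ∀ i : ℕ, 1 ≤ i → i < p / 2 → Odd i → w (i : ZMod p) = x)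
    (hwy : ∀ i : ℕ, 1 ≤ i → i < p / 2 → Even i → w (i : ZMod p) = y)
    (hwsym : ∀ i : ℕ, 1 ≤ i → i < p / 2 →
      w (((p - i : ℕ) : ZMod p)) = w (i : ZMod p))
    (φ : ZMod p → Bool) (halt : ∀ i : ZMod p, φ (i + 1) ≠ φ i) :
    ∀ k : ZMod p,
      (φ k = true → (∑ u : ZMod p, if φ (u + k) = true then w u else 0) =
        (((p / 2 : ℕ) : ℝ) - 1) * y + z) ∧
      (φ k = false → (∑ u : ZMod p, if φ (u + k) = true then w u else 0) =
        (((p / 2 : ℕ) : ℝ) - 1) * x + t) :=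
  type7_alternate_constant2Labelling_general p hp4 w z x y t hw0 hwt hwx hwy hwsym φ halt
end

section
/- Let r ≥ 0 and c be integers with |c| ≤ r. The intersection of the diagonal D_c = {(m, m+c) : m ∈ ℤ} with the ball B_r(0,0) = {u ∈ ℤ² : |u₁|+|u₂| ≤ r} has exactly r+1 elements if c ≡ r (mod 2), and exactly r elements if c ≢ r (mod 2). -/
/-!
The point `(m, m + c)` lies in `B_r` iff `|m| + |m + c| ≤ r`; as `|c| ≤ r`, this holds exactly for
`-⌊(r + c) / 2⌋ ≤ m ≤ ⌊(r - c) / 2⌋`. Hence the intersection has `⌊(r - c) / 2⌋ + ⌊(r + c) / 2⌋ + 1`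
points, and since `r - c` and `r + c` have the same parity this is `r + 1` when both are even and
`r` when both are odd.
-/

def diagonal (c : ℤ) : Set (ℤ × ℤ) := {u | ∃ m : ℤ, u = (m, m + c)}

def manhattanBall (r : ℤ) : Set (ℤ × ℤ) := {u | |u.1| + |u.2| ≤ r}

theorem Int.ncard_Icc_of_le {a b : ℤ} (h : a ≤ b + 1) : ((Set.Icc a b).ncard : ℤ) = b + 1 - a := by
  rw [← Finset.coe_Icc, Set.ncard_coe_finset, Int.card_Icc]
  omega

theorem Int.abs_add_abs_add_le_iff {r c m : ℤ} (hc : |c| ≤ r) :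
    |m| + |m + c| ≤ r ↔ -((r + c) / 2) ≤ m ∧ m ≤ (r - c) / 2 := by
  rcases abs_cases c with ⟨_, _⟩ | ⟨_, _⟩ <;>
  rcases abs_cases m with ⟨_, _⟩ | ⟨_, _⟩ <;>
  rcases abs_cases (m + c) with ⟨_, _⟩ | ⟨_, _⟩ <;> omega

theorem diagonal_inter_manhattanBall_eq_image {r c : ℤ} (hc : |c| ≤ r) :
    diagonal c ∩ manhattanBall r =
      (fun m : ℤ ↦ (m, m + c)) '' Set.Icc (-((r + c) / 2)) ((r - c) / 2) := by
  ext u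
  constructor
  · rintro ⟨⟨m, rfl⟩, hm⟩
    exact ⟨m, (Int.abs_add_abs_add_le_iff hc).mp hm, rfl⟩
  · rintro ⟨m, hm, rfl⟩
    exact ⟨⟨m, rfl⟩, (Int.abs_add_abs_add_le_iff hc).mpr hm⟩

theorem ncard_diagonal_inter_manhattanBall {r c : ℤ} (hc : |c| ≤ r) :
    ((diagonal c ∩ manhattanBall r).ncard : ℤ) = (r - c) / 2 + (r + c) / 2 + 1 := by
  have hinj : Function.Injective (fun m : ℤ ↦ (m, m + c)) := fun _ _ h ↦ congrArg Prod.fst h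
  rw [diagonal_inter_manhattanBall_eq_image hc, Set.ncard_image_of_injective _ hinj,
    Int.ncard_Icc_of_le (by cases abs_le.mp hc; omega)]
  ring

theorem diagonal_inter_ball_card_general (r c : ℤ) (hc : |c| ≤ r) :
    (c % 2 = r % 2 →
      ((({u : ℤ × ℤ | ∃ m : ℤ, u = (m, m + c)} ∩
          {u : ℤ × ℤ | |u.1| + |u.2| ≤ r}).ncard : ℤ) = r + 1)) ∧
    (c % 2 ≠ r % 2 →
      ((({u : ℤ × ℤ | ∃ m : ℤ, u = (m, m + c)} ∩
          {u : ℤ × ℤ | |u.1| + |u.2| ≤ r}).ncard : ℤ) = r)) := by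
  have hcard := ncard_diagonal_inter_manhattanBall hc
  unfold diagonal manhattanBall at hcard
  exact ⟨fun _ ↦ by omega, fun _ ↦ by omega⟩

/-- For integers `r ≥ 0` and `c` with `|c| ≤ r`, the diagonal
`D_c = {(m, m+c) : m ∈ ℤ}` meets the Manhattan ball
`B_r(0,0) = {u : |u₁| + |u₂| ≤ r}` in exactly `r+1` points if `c ≡ r (mod 2)`,
and in exactly `r` points otherwise. -/
theorem diagonal_inter_ball_card (r c : ℤ) (hr : 0 ≤ r) (hc : |c| ≤ r) :
    (c % 2 = r % 2 →
      ((({u : ℤ × ℤ | ∃ m : ℤ, u = (m, m + c)} ∩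
          {u : ℤ × ℤ | |u.1| + |u.2| ≤ r}).ncard : ℤ) = r + 1)) ∧
    (c % 2 ≠ r % 2 →
      ((({u : ℤ × ℤ | ∃ m : ℤ, u = (m, m + c)} ∩
          {u : ℤ × ℤ | |u.1| + |u.2| ≤ r}).ncard : ℤ) = r)) :=
  diagonal_inter_ball_card_general r c hc
end
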